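/- arXiv:nlin/0401033 — 2 statements merged into one kernel-verified Lean document; each statement's English description precedes it below -/
import Mathlib

section
/- Let ω > 0, K ∈ ℝ^{2×2}, and Φ(t) the rotation matrix with rows (cos ωt, sin ωt), (-sin ωt, cos ωt). Then lim_{T→∞} (1/T)∫₀ᵀ Φ(t)ᵀ K Φ(t) dt = (1/2)(tr K)·I − (1/2)tr(JK)·J, where J = ![![0,1],![-1,0]]. -/
open Real Filter Matrix

lemma rot_avg_key (ω a b c : ℝ) (hω : ω ≠ 0) :
    Tendsto (fun T : ℝ => (1/T) * ∫ t in (0:ℝ)..T,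
        (a + b * Real.cos (2*ω*t) + c * Real.sin (2*ω*t))) atTop (nhds a) := by
  have hcont : Continuous fun t : ℝ => a + b * Real.cos (2*ω*t) + c * Real.sin (2*ω*t) := by
    continuity
  have hder : ∀ t : ℝ, HasDerivAt
      (fun t => a*t + b/(2*ω) * Real.sin (2*ω*t) - c/(2*ω) * Real.cos (2*ω*t))
      (a + b * Real.cos (2*ω*t) + c * Real.sin (2*ω*t)) t := by
    intro t
    have hlin : HasDerivAt (fun t : ℝ => 2*ω*t) (2*ω) t := by
      simpa using (hasDerivAt_id t).const_mul (2*ω)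
    have hs : HasDerivAt (fun t : ℝ => Real.sin (2*ω*t)) (Real.cos (2*ω*t) * (2*ω)) t :=
      (Real.hasDerivAt_sin (2*ω*t)).comp t hlin
    have hc : HasDerivAt (fun t : ℝ => Real.cos (2*ω*t)) (-Real.sin (2*ω*t) * (2*ω)) t :=
      (Real.hasDerivAt_cos (2*ω*t)).comp t hlin
    have := ((hasDerivAt_id t).const_mul a).add (hs.const_mul (b/(2*ω))) |>.sub
      (hc.const_mul (c/(2*ω)))
    refine HasDerivAt.congr_deriv this ?_
    field_simp
    ring
  have hint : ∀ T : ℝ, (∫ t in (0:ℝ)..T, (a + b * Real.cos (2*ω*t) + c * Real.sin (2*ω*t)))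
      = a*T + b/(2*ω) * Real.sin (2*ω*T) + c/(2*ω) * (1 - Real.cos (2*ω*T)) := by
    intro T
    rw [intervalIntegral.integral_eq_sub_of_hasDerivAt (fun t _ => hder t)
      (hcont.intervalIntegrable 0 T)]
    simp
    ring
  have hM : ∀ T : ℝ, |b/(2*ω) * Real.sin (2*ω*T) + c/(2*ω) * (1 - Real.cos (2*ω*T))|
      ≤ |b/(2*ω)| + |c/(2*ω)| * 2 := by
    intro T
    have h1 : |Real.sin (2*ω*T)| ≤ 1 := Real.abs_sin_le_one _
    have h2 : |1 - Real.cos (2*ω*T)| ≤ 2 := by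
      have := Real.neg_one_le_cos (2*ω*T)
      have := Real.cos_le_one (2*ω*T)
      rw [abs_le]; constructor <;> linarith
    calc |b/(2*ω) * Real.sin (2*ω*T) + c/(2*ω) * (1 - Real.cos (2*ω*T))|
        ≤ |b/(2*ω) * Real.sin (2*ω*T)| + |c/(2*ω) * (1 - Real.cos (2*ω*T))| := abs_add_le _ _
      _ ≤ |b/(2*ω)| * 1 + |c/(2*ω)| * 2 := by
          rw [abs_mul, abs_mul]
          gcongr
      _ = |b/(2*ω)| + |c/(2*ω)| * 2 := by ring
  set M := |b/(2*ω)| + |c/(2*ω)| * 2 with hMdef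
  have h0 : Tendsto (fun T : ℝ => (1/T) *
      (b/(2*ω) * Real.sin (2*ω*T) + c/(2*ω) * (1 - Real.cos (2*ω*T)))) atTop (nhds 0) := by
    refine squeeze_zero_norm' (a := fun T : ℝ => M * (1/T)) ?_ ?_
    · filter_upwards [eventually_gt_atTop (0:ℝ)] with T hT
      rw [Real.norm_eq_abs, abs_mul, abs_of_pos (by positivity : (0:ℝ) < 1/T)]
      rw [mul_comm]
      gcongr
      exact hM T
    · simpa using (tendsto_inv_atTop_zero (𝕜 := ℝ)).const_mul M
  have : Tendsto (fun T : ℝ => a * ((1/T) * T) + (1/T) *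
      (b/(2*ω) * Real.sin (2*ω*T) + c/(2*ω) * (1 - Real.cos (2*ω*T)))) atTop (nhds a) := by
    have ha : Tendsto (fun T : ℝ => a * ((1/T) * T)) atTop (nhds a) := by
      apply Tendsto.congr' _ tendsto_const_nhds
      filter_upwards [eventually_ne_atTop (0:ℝ)] with T hT
      field_simp
    simpa using ha.add h0
  exact this.congr (fun T => by rw [hint T]; ring)

theorem matrix_rotation_average (ω : ℝ) (hω : 0 < ω)
    (K : Matrix (Fin 2) (Fin 2) ℝ)
    (J : Matrix (Fin 2) (Fin 2) ℝ) (hJ : J = !![0, 1; -1, 0])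
    (Φ : ℝ → Matrix (Fin 2) (Fin 2) ℝ)
    (hΦ : ∀ t, Φ t = !![Real.cos (ω * t), Real.sin (ω * t);
                        -Real.sin (ω * t), Real.cos (ω * t)]) :
    Tendsto
      (fun T : ℝ =>
        Matrix.of fun i j : Fin 2 => (1 / T) * ∫ t in (0:ℝ)..T, ((Φ t)ᵀ * K * Φ t) i j)
      atTop
      (nhds (((1 / 2 : ℝ) * K.trace) • (1 : Matrix (Fin 2) (Fin 2) ℝ)
              - ((1 / 2 : ℝ) * (J * K).trace) • J)) := by
  have hω' : ω ≠ 0 := ne_of_gt hω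
  refine tendsto_pi_nhds.2 ?_
  intro i
  refine tendsto_pi_nhds.2 ?_
  intro j
  simp only [Matrix.of_apply]
  have hent : ∀ (a b c : ℝ), (∀ t : ℝ, ((Φ t)ᵀ * K * Φ t) i j
        = a + b * Real.cos (2*ω*t) + c * Real.sin (2*ω*t)) →
      ((((1 / 2 : ℝ) * K.trace) • (1 : Matrix (Fin 2) (Fin 2) ℝ)
          - ((1 / 2 : ℝ) * (J * K).trace) • J) i j = a) →
      Tendsto (fun T : ℝ => (1 / T) * ∫ t in (0:ℝ)..T, ((Φ t)ᵀ * K * Φ t) i j)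
        atTop (nhds ((((1 / 2 : ℝ) * K.trace) • (1 : Matrix (Fin 2) (Fin 2) ℝ)
          - ((1 / 2 : ℝ) * (J * K).trace) • J) i j)) := by
    intro a b c hf hval
    rw [hval]
    simp_rw [hf]
    exact rot_avg_key ω a b c hω'
  fin_cases i <;> fin_cases j
  · refine hent ((K 0 0 + K 1 1)/2) ((K 0 0 - K 1 1)/2) (-(K 0 1 + K 1 0)/2) ?_ ?_
    · intro t
      have h := Real.sin_sq_add_cos_sq (ω*t)
      rw [show (2:ℝ)*ω*t = 2*(ω*t) by ring, Real.cos_two_mul, Real.sin_two_mul]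
      simp [hΦ, Matrix.mul_apply, Fin.sum_univ_succ]
      linear_combination (K 1 1) * h
    · simp [hJ, Matrix.trace_fin_two, Matrix.mul_apply, Matrix.vecMul, dotProduct, Fin.sum_univ_succ]
      ring
  · refine hent ((K 0 1 - K 1 0)/2) ((K 0 1 + K 1 0)/2) ((K 0 0 - K 1 1)/2) ?_ ?_
    · intro t
      have h := Real.sin_sq_add_cos_sq (ω*t)
      rw [show (2:ℝ)*ω*t = 2*(ω*t) by ring, Real.cos_two_mul, Real.sin_two_mul]
      simp [hΦ, Matrix.mul_apply, Fin.sum_univ_succ]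
      linear_combination (-K 1 0) * h
    · simp [hJ, Matrix.trace_fin_two, Matrix.mul_apply, Matrix.vecMul, dotProduct, Fin.sum_univ_succ]
      ring
  · refine hent ((K 1 0 - K 0 1)/2) ((K 0 1 + K 1 0)/2) ((K 0 0 - K 1 1)/2) ?_ ?_
    · intro t
      have h := Real.sin_sq_add_cos_sq (ω*t)
      rw [show (2:ℝ)*ω*t = 2*(ω*t) by ring, Real.cos_two_mul, Real.sin_two_mul]
      simp [hΦ, Matrix.mul_apply, Fin.sum_univ_succ]
      linear_combination (-K 0 1) * h
    · simp [hJ, Matrix.trace_fin_two, Matrix.mul_apply, Matrix.vecMul, dotProduct, Fin.sum_univ_succ]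
      ring
  · refine hent ((K 0 0 + K 1 1)/2) ((K 1 1 - K 0 0)/2) ((K 0 1 + K 1 0)/2) ?_ ?_
    · intro t
      have h := Real.sin_sq_add_cos_sq (ω*t)
      rw [show (2:ℝ)*ω*t = 2*(ω*t) by ring, Real.cos_two_mul, Real.sin_two_mul]
      simp [hΦ, Matrix.mul_apply, Fin.sum_univ_succ]
      linear_combination (K 0 0) * h
    · simp [hJ, Matrix.trace_fin_two, Matrix.mul_apply, Matrix.vecMul, dotProduct, Fin.sum_univ_succ]
      ring
end

section
/- Let α, β ∈ ℝ with α > β, and consider u̇ = (1/2)(α − (1/4)‖u‖² − β)·u on ℝ². Then the set of nonzero equilibria is exactly the circle ‖u‖ = 2√(α − β), and any solution with u(0) ≠ 0 satisfies ‖u(t)‖ → 2√(α − β) as t → ∞. -/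
open Filter

theorem vanderpol_limit_cycle_attractor (α β : ℝ) (hαβ : α > β)
    (F : EuclideanSpace ℝ (Fin 2) → EuclideanSpace ℝ (Fin 2))
    (hF : ∀ u, F u = ((1 / 2 : ℝ) * (α - (1 / 4) * ‖u‖ ^ 2 - β)) • u) :
    {u : EuclideanSpace ℝ (Fin 2) | u ≠ 0 ∧ F u = 0}
        = {u : EuclideanSpace ℝ (Fin 2) | ‖u‖ = 2 * Real.sqrt (α - β)} ∧
      ∀ u : ℝ → EuclideanSpace ℝ (Fin 2),
        (∀ t, HasDerivAt u (F (u t)) t) → u 0 ≠ 0 →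
        Tendsto (fun t => ‖u t‖) atTop (nhds (2 * Real.sqrt (α - β))) := by
  have ha : (0:ℝ) < α - β := sub_pos.2 hαβ
  constructor
  · ext v
    simp only [Set.mem_setOf_eq, hF]
    constructor
    · rintro ⟨hv0, hv⟩
      rcases smul_eq_zero.1 hv with hc | hc
      · have h2 : α - (1/4) * ‖v‖^2 - β = 0 := by
          rcases mul_eq_zero.1 hc with h | h
          · norm_num at h
          · exact h
        have : ‖v‖^2 = 4 * (α - β) := by linarith
        have : ‖v‖ = Real.sqrt (4 * (α - β)) := by
          rw [← this, Real.sqrt_sq (norm_nonneg v)]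
        rw [this, show (4:ℝ) * (α - β) = 2^2 * (α - β) by norm_num,
          Real.sqrt_mul (by positivity), Real.sqrt_sq (by norm_num)]
      · exact absurd hc hv0
    · intro hv
      have hvpos : 0 < ‖v‖ := by
        rw [hv]; positivity
      refine ⟨norm_pos_iff.1 hvpos, ?_⟩
      have : ‖v‖^2 = 4 * (α - β) := by
        rw [hv]; rw [mul_pow, Real.sq_sqrt (le_of_lt ha)]; ring
      rw [this, show (1/2 : ℝ) * (α - (1/4) * (4*(α-β)) - β) = 0 by ring, zero_smul]
  · intro u hu hu0
    set a : ℝ := α - β with hadef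
    -- the squared norm
    set ρ : ℝ → ℝ := fun t => ‖u t‖^2 with hρdef
    have hρ : ∀ t, HasDerivAt ρ ((a - ρ t / 4) * ρ t) t := by
      intro t
      have h1 : HasDerivAt (fun t => (inner ℝ (u t) (u t) : ℝ))
          (inner ℝ (u t) (F (u t)) + inner ℝ (F (u t)) (u t)) t :=
        HasDerivAt.inner ℝ (hu t) (hu t)
      have h2 : (fun t => (inner ℝ (u t) (u t) : ℝ)) = ρ := by
        funext s
        rw [real_inner_self_eq_norm_sq]
      have h3 : (inner ℝ (u t) (F (u t)) : ℝ) + inner ℝ (F (u t)) (u t)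
          = (a - ρ t / 4) * ρ t := by
        rw [hF, real_inner_smul_right, real_inner_smul_left,
          real_inner_self_eq_norm_sq]
        simp only [hρdef, hadef]; ring
      rw [h2, h3] at h1
      exact h1
    have hρ0 : 0 < ρ 0 := by
      have : (0:ℝ) < ‖u 0‖ := norm_pos_iff.2 hu0
      simp only [hρdef]
      positivity
    have hρcont : Continuous ρ :=
      continuous_iff_continuousAt.2 fun t => (hρ t).continuousAt
    -- positivity of ρ via an integrating factor
    have hfcont : Continuous (fun s => a - ρ s / 4) :=
      (continuous_const.sub (hρcont.div_const 4))
    set φ : ℝ → ℝ := fun t => ∫ s in (0:ℝ)..t, (a - ρ s / 4) with hφdef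
    have hφ : ∀ t, HasDerivAt φ (a - ρ t / 4) t := by
      intro t
      exact intervalIntegral.integral_hasDerivAt_right
        (hfcont.intervalIntegrable 0 t)
        (hfcont.aestronglyMeasurable.stronglyMeasurableAtFilter)
        hfcont.continuousAt
    have hm : ∀ t, HasDerivAt (fun t => ρ t * Real.exp (-φ t)) 0 t := by
      intro t
      have he : HasDerivAt (fun t => Real.exp (-φ t))
          (Real.exp (-φ t) * (-(a - ρ t / 4))) t := by
        have := (Real.hasDerivAt_exp (-φ t)).comp t ((hφ t).neg)
        exact this
      have := (hρ t).mul he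
      refine this.congr_deriv ?_
      ring
    have hmconst : ∀ t, ρ t * Real.exp (-φ t) = ρ 0 := by
      intro t
      have hd : Differentiable ℝ (fun t => ρ t * Real.exp (-φ t)) :=
        fun t => (hm t).differentiableAt
      have := is_const_of_deriv_eq_zero hd (fun t => (hm t).deriv) t 0
      simpa [hφdef] using this
    have hρpos : ∀ t, 0 < ρ t := by
      intro t
      have h := hmconst t
      have he : 0 < Real.exp (-φ t) := Real.exp_pos _
      nlinarith [Real.exp_pos (-φ t)]
    -- Bernoulli substitution w = ρ⁻¹
    set w : ℝ → ℝ := fun t => (ρ t)⁻¹ with hwdef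
    have hw : ∀ t, HasDerivAt w (1/4 - a * w t) t := by
      intro t
      have := (hρ t).inv (ne_of_gt (hρpos t))
      refine this.congr_deriv ?_
      have h0 : ρ t ≠ 0 := ne_of_gt (hρpos t)
      show _ = 1/4 - a * (ρ t)⁻¹
      field_simp [hwdef]
      ring
    -- ψ t = (w t - 1/(4a)) * exp(a t) is constant
    have hψ : ∀ t, HasDerivAt (fun t => (w t - 1/(4*a)) * Real.exp (a*t)) 0 t := by
      intro t
      have he : HasDerivAt (fun t => Real.exp (a*t)) (Real.exp (a*t) * a) t := by
        have := (Real.hasDerivAt_exp (a*t)).comp t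
          ((hasDerivAt_id t).const_mul a)
        simpa [Function.comp_def] using this
      have := ((hw t).sub_const (1/(4*a))).mul he
      refine this.congr_deriv ?_
      have ha' : a ≠ 0 := ne_of_gt ha
      field_simp
      ring
    have hψconst : ∀ t, (w t - 1/(4*a)) * Real.exp (a*t) = w 0 - 1/(4*a) := by
      intro t
      have hd : Differentiable ℝ (fun t => (w t - 1/(4*a)) * Real.exp (a*t)) :=
        fun t => (hψ t).differentiableAt
      have := is_const_of_deriv_eq_zero hd (fun t => (hψ t).deriv) t 0
      simpa using this
    have hwformula : ∀ t, w t = 1/(4*a) + (w 0 - 1/(4*a)) * Real.exp (-(a*t)) := by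
      intro t
      have h := hψconst t
      have he : Real.exp (a*t) ≠ 0 := (Real.exp_pos _).ne'
      have hkey : w t - 1/(4*a) = (w 0 - 1/(4*a)) * Real.exp (-(a*t)) := by
        calc w t - 1/(4*a)
            = (w t - 1/(4*a)) * (Real.exp (a*t) * Real.exp (-(a*t))) := by
              rw [← Real.exp_add]; simp
          _ = (w 0 - 1/(4*a)) * Real.exp (-(a*t)) := by rw [← mul_assoc, h]
      linarith [hkey]
    -- limits
    have hexp : Tendsto (fun t => Real.exp (-(a*t))) atTop (nhds 0) := by
      apply Real.tendsto_exp_atBot.comp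
      apply tendsto_neg_atTop_atBot.comp
      exact Tendsto.const_mul_atTop ha tendsto_id
    have hwlim : Tendsto w atTop (nhds (1/(4*a))) := by
      have : Tendsto (fun t => 1/(4*a) + (w 0 - 1/(4*a)) * Real.exp (-(a*t)))
          atTop (nhds (1/(4*a) + (w 0 - 1/(4*a)) * 0)) :=
        tendsto_const_nhds.add (tendsto_const_nhds.mul hexp)
      rw [mul_zero, add_zero] at this
      exact this.congr fun t => (hwformula t).symm
    have hρlim : Tendsto ρ atTop (nhds (4*a)) := by
      have hne : (1/(4*a) : ℝ) ≠ 0 := by positivity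
      have := hwlim.inv₀ hne
      have hinv : (1/(4*a) : ℝ)⁻¹ = 4*a := by
        field_simp
      rw [hinv] at this
      convert this using 1
      funext t
      simp [hwdef, inv_inv]
    have hnorm : (fun t => ‖u t‖) = fun t => Real.sqrt (ρ t) := by
      funext t
      rw [hρdef]
      simp [Real.sqrt_sq (norm_nonneg (u t))]
    rw [hnorm]
    have := (Real.continuous_sqrt.continuousAt (x := 4*a)).tendsto.comp hρlim
    convert this using 1
    · rfl
    rw [show (4:ℝ)*a = 2^2*a by ring, Real.sqrt_mul (by positivity),
      Real.sqrt_sq (by norm_num)]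
end
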